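/- arXiv:2106.15594 — 4 statements merged into one kernel-verified Lean document; each statement's English description precedes it below -/
import Mathlib

section
/- Let X be a nonempty set, ℓ a semi-metric on X, and f : X → ℝ attaining its supremum at x* ∈ X and satisfying the weak Lipschitz condition. Fix constants ν₁ > 0, 0 < ρ < 1, c > 0 and an integer h ≥ 0. Let U ⊆ X be a nonempty subset with diam(U) := sup_{x,x'∈U} ℓ(x,x') ≤ ν₁ρ^h, and suppose the regret of U satisfies f(x*) − sup_{x∈U} f(x) ≤ c·ν₁ρ^h. Then U ⊆ X_{max{2c, c+1}·ν₁ρ^h}, i.e., every x' ∈ U satisfies f(x') ≥ f(x*) − max{2c, c+1}·ν₁ρ^h. -/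
/-- Lemma 4 of the paper: if a cell `U` of diameter at most `ν₁ρ^h` has
regret `f xstar - sup_{x ∈ U} f x ≤ c ν₁ ρ^h`, then every point of `U` is
`max {2c, c+1}·ν₁ρ^h`-optimal. -/
theorem cell_subset_near_optimal_set
    {X : Type*} [Nonempty X] (ℓ : X → X → ℝ) (f : X → ℝ) (xstar : X)
    (hℓ_nonneg : ∀ x x' : X, 0 ≤ ℓ x x')
    (hℓ_symm : ∀ x x' : X, ℓ x x' = ℓ x' x)
    (hℓ_eq_zero : ∀ x x' : X, ℓ x x' = 0 ↔ x = x')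
    (hmax : ∀ x : X, f x ≤ f xstar)
    (hweak : ∀ x x' : X,
      f xstar - f x' ≤ f xstar - f x + max (f xstar - f x) (ℓ x x'))
    (ν₁ ρ c : ℝ) (hν₁ : 0 < ν₁) (hρ₀ : 0 < ρ) (hρ₁ : ρ < 1) (hc : 0 < c)
    (h : ℕ) (U : Set X) (hU : U.Nonempty)
    (hdiam : ∀ x ∈ U, ∀ x' ∈ U, ℓ x x' ≤ ν₁ * ρ ^ h)
    (hregret : f xstar - sSup (f '' U) ≤ c * (ν₁ * ρ ^ h)) :
    ∀ x' ∈ U, f x' ≥ f xstar - max (2 * c) (c + 1) * (ν₁ * ρ ^ h) := by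
  intro x' hx'
  set ν : ℝ := ν₁ * ρ ^ h with hν
  have hνpos : 0 < ν := by positivity
  have hgoal : f xstar - f x' ≤ max (2 * c) (c + 1) * ν := by
    apply le_of_forall_pos_le_add
    intro ε hε
    have hne : (f '' U).Nonempty := hU.image f
    obtain ⟨y, hy, hylt⟩ := exists_lt_of_lt_csSup hne
      (show sSup (f '' U) - ε / 2 < sSup (f '' U) by linarith)
    obtain ⟨x, hxU, rfl⟩ := hy
    have h1 : f xstar - f x ≤ c * ν + ε / 2 := by linarith
    have h2 : ℓ x x' ≤ ν := hdiam x hxU x' hx'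
    have h3 := hweak x x'
    have h4 : max (f xstar - f x) (ℓ x x') ≤ max (c * ν) ν + ε / 2 := by
      rcases max_cases (f xstar - f x) (ℓ x x') with ⟨he, _⟩ | ⟨he, _⟩ <;> rw [he]
      · exact le_trans h1 (by gcongr; exact le_max_left _ _)
      · exact le_trans h2 (by linarith [le_max_right (c * ν) ν])
    have h5 : c * ν + max (c * ν) ν = max (2 * c) (c + 1) * ν := by
      rcases le_total c 1 with hle | hle
      · have h6 : c * ν ≤ ν := by nlinarith
        rw [max_eq_right h6, max_eq_right (by linarith : 2 * c ≤ c + 1)]; ring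
      · have h6 : ν ≤ c * ν := by nlinarith
        rw [max_eq_left h6, max_eq_left (by linarith : c + 1 ≤ 2 * c)]; ring
    calc f xstar - f x' ≤ (c * ν + ε / 2) + (max (c * ν) ν + ε / 2) := by
          linarith [h3, h4, h1]
      _ = max (2 * c) (c + 1) * ν + ε := by rw [← h5]; ring
  linarith
end

section
/- Let X be a nonempty set, ℓ a semi-metric on X, and f : X → ℝ attaining its supremum at x* ∈ X and satisfying the weak Lipschitz condition. Fix ν₁, ν₂, C > 0, 0 < ρ < 1, d ≥ 0 and an integer h ≥ 0. Let I be a finite index set and, for each i ∈ I, let U_i ⊆ X be a cell with diam(U_i) ≤ ν₁ρ^h, together with a center x_i ∈ U_i such that the ball B(x_i, ν₂ρ^h) := {x ∈ X : ℓ(x_i, x) < ν₂ρ^h} satisfies B(x_i, ν₂ρ^h) ⊆ U_i, and the balls B(x_i, ν₂ρ^h), i ∈ I, are pairwise disjoint. Assume every cell is 2ν₁ρ^h-optimal, i.e., sup_{x∈U_i} f(x) ≥ f(x*) − 2ν₁ρ^h for each i ∈ I. Assume further the packing bound: every finite family of points y₁, …, y_K ∈ X whose balls B(y_k, ν₂ρ^h)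 are pairwise disjoint and all contained in X_{4ν₁ρ^h} satisfies K ≤ C·(ν₂ρ^h)^{−d}. Then |I| ≤ C·(ν₂ρ^h)^{−d}. -/
/-- the number of `2ν₁ρ^h`-optimal cells at depth `h` is bounded by
`C (ν₂ ρ^h)^{-d}`, the packing bound coming from the near-optimality dimension. -/
theorem card_near_optimal_cells_le
    {X : Type*} [Nonempty X] (ℓ : X → X → ℝ) (f : X → ℝ) (xstar : X)
    (hℓ_nonneg : ∀ x x' : X, 0 ≤ ℓ x x')
    (hℓ_symm : ∀ x x' : X, ℓ x x' = ℓ x' x)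
    (hℓ_eq_zero : ∀ x x' : X, ℓ x x' = 0 ↔ x = x')
    (hmax : ∀ x : X, f x ≤ f xstar)
    (hweak : ∀ x x' : X,
      f xstar - f x' ≤ f xstar - f x + max (f xstar - f x) (ℓ x x'))
    (ν₁ ν₂ C ρ d : ℝ) (hν₁ : 0 < ν₁) (hν₂ : 0 < ν₂) (hC : 0 < C)
    (hρ₀ : 0 < ρ) (hρ₁ : ρ < 1) (hd : 0 ≤ d) (h : ℕ)
    {ι : Type*} [Fintype ι] (U : ι → Set X) (ctr : ι → X)
    (hdiam : ∀ i : ι, ∀ x ∈ U i, ∀ x' ∈ U i, ℓ x x' ≤ ν₁ * ρ ^ h)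
    (hctr_mem : ∀ i : ι, ctr i ∈ U i)
    (hball_sub : ∀ i : ι, {x : X | ℓ (ctr i) x < ν₂ * ρ ^ h} ⊆ U i)
    (hdisj : ∀ i j : ι, i ≠ j →
      {x : X | ℓ (ctr i) x < ν₂ * ρ ^ h} ∩ {x : X | ℓ (ctr j) x < ν₂ * ρ ^ h} = ∅)
    (hopt : ∀ i : ι, sSup (f '' U i) ≥ f xstar - 2 * ν₁ * ρ ^ h)
    (hpack : ∀ (K : ℕ) (y : Fin K → X),
      (∀ k : Fin K,
        {x : X | ℓ (y k) x < ν₂ * ρ ^ h} ⊆ {x : X | f x ≥ f xstar - 4 * ν₁ * ρ ^ h}) →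
      (∀ k k' : Fin K, k ≠ k' →
        {x : X | ℓ (y k) x < ν₂ * ρ ^ h} ∩ {x : X | ℓ (y k') x < ν₂ * ρ ^ h} = ∅) →
      (K : ℝ) ≤ C * (ν₂ * ρ ^ h) ^ (-d)) :
    (Fintype.card ι : ℝ) ≤ C * (ν₂ * ρ ^ h) ^ (-d) := by

  -- every ball is contained in the 4ν₁ρ^h-near-optimal set
  have key : ∀ i : ι, {x : X | ℓ (ctr i) x < ν₂ * ρ ^ h} ⊆
      {x : X | f x ≥ f xstar - 4 * ν₁ * ρ ^ h} := by
    intro i x hx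
    have hxU : x ∈ U i := hball_sub i hx
    have hbdd : BddAbove (f '' U i) := ⟨f xstar, by rintro _ ⟨u, _, rfl⟩; exact hmax u⟩
    have hne : (f '' U i).Nonempty := ⟨f (ctr i), ctr i, hctr_mem i, rfl⟩
    have hfx : f xstar - f x ≤ 4 * ν₁ * ρ ^ h := by
      refine le_of_forall_pos_le_add ?_
      intro η hη
      have hlt : f xstar - 2 * ν₁ * ρ ^ h - η / 2 < sSup (f '' U i) := by
        have := hopt i; linarith
      obtain ⟨_, ⟨u, huU, rfl⟩, hu⟩ := exists_lt_of_lt_csSup hne hlt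
      have h1 : f xstar - f u ≤ 2 * ν₁ * ρ ^ h + η / 2 := by linarith
      have h2 : ℓ u x ≤ ν₁ * ρ ^ h := hdiam i u huU x hxU
      have h3 := hweak u x
      have hmaxle : max (f xstar - f u) (ℓ u x) ≤ 2 * ν₁ * ρ ^ h + η / 2 := by
        refine max_le h1 (h2.trans ?_)
        nlinarith [pow_pos hρ₀ h]
      linarith
    simp only [Set.mem_setOf_eq, ge_iff_le]
    linarith
  -- apply the packing bound with the centers
  set K := Fintype.card ι with hK
  have e : Fin K ≃ ι := (Fintype.equivFin ι).symm
  have := hpack K (fun k => ctr (e k))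
    (fun k => key (e k))
    (fun k k' hkk' => hdisj (e k) (e k') (fun heq => hkk' (e.injective heq)))
  exact this
end

section
/- Fix reals c > 0, d ≥ 0 and 0 < ρ < 1. For real n > e, define Ĥ(n) := log( c·(n/log n)^{−1/(d+2)} ) / log ρ, so that ρ^{Ĥ(n)} = c·(n/log n)^{−1/(d+2)}. Then, as n → ∞, the function g(n) := n·ρ^{Ĥ(n)} + (log n)·ρ^{−Ĥ(n)(1+d)} + Ĥ(n)·max{ ρ^{Ĥ(n)(1−d)}, Ĥ(n) } satisfies g(n) = O( n^{(d+1)/(d+2)} · (log n)^{1/(d+2)} ). -/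
/-! Write `t = n / log n`. The depth limit is chosen so that `ρ ^ (Ĥ s) = c ^ s t ^ (-s/(d+2))`,
and the target rate is `n ^ ((d+1)/(d+2)) (log n) ^ (1/(d+2)) = t ^ ((d+1)/(d+2)) log n`. Hence
the first two regret terms are exactly constant multiples of the target. For the last one,
`Ĥ = O(log n)`, `ρ ^ (Ĥ (1-d))` is a constant times the smaller power `t ^ ((d-1)/(d+2))`, and
`log n ~ log t = o(t ^ ((d+1)/(d+2)))`. -/

open Real Filter Asymptotics

theorem isBigO_max {α F : Type*} [Norm F] {l : Filter α} {f g : α → ℝ} {h : α → F}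
    (hf : f =O[l] h) (hg : g =O[l] h) : (fun x => max (f x) (g x)) =O[l] h := by
  refine IsBigO.trans (isBigO_of_le _ fun x => ?_) (hf.norm_left.add hg.norm_left)
  calc ‖max (f x) (g x)‖ ≤ max |f x| |g x| := abs_max_le_max_abs_abs
    _ ≤ |f x| + |g x| := max_le_add_of_nonneg (abs_nonneg _) (abs_nonneg _)
    _ ≤ ‖|f x| + |g x|‖ := le_abs_self _

theorem isBigO_rpow_rpow_atTop_of_le {a b : ℝ} (h : b ≤ a) :
    (fun x : ℝ => x ^ b) =O[atTop] fun x => x ^ a := by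
  refine IsBigO.of_bound 1 ?_
  filter_upwards [eventually_ge_atTop 1] with x hx
  rw [norm_of_nonneg (rpow_nonneg (by linarith) _), norm_of_nonneg (rpow_nonneg (by linarith) _),
    one_mul]
  exact rpow_le_rpow_of_exponent_le hx h

theorem div_rpow_mul_self {x y : ℝ} (hx : 0 ≤ x) (hy : 0 < y) (a : ℝ) :
    (x / y) ^ a * y = x ^ a * y ^ (1 - a) := by
  rw [div_rpow hx hy.le, rpow_sub hy, rpow_one]
  field_simp

theorem rpow_log_div_log_mul {ρ X : ℝ} (hρ₀ : 0 < ρ) (hρ₁ : ρ ≠ 1) (hX : 0 < X) (s : ℝ) :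
    ρ ^ (log X / log ρ * s) = X ^ s := by
  have := log_ne_zero_of_pos_of_ne_one hρ₀ hρ₁
  rw [rpow_def_of_pos hρ₀, rpow_def_of_pos hX]
  field_simp

theorem isEquivalent_log_div_log : (fun x => log (x / log x)) ~[atTop] log := by
  refine IsLittleO.isEquivalent <|
    ((isLittleO_log_id_atTop.comp_tendsto tendsto_log_atTop).neg_left).congr' ?_ EventuallyEq.rfl
  filter_upwards [eventually_gt_atTop 1] with x hx
  simp [log_div (by positivity) (log_pos hx).ne']

theorem tendsto_div_log_atTop : Tendsto (fun x => x / log x) atTop atTop := by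
  refine (tendsto_exp_atTop.comp
    (isEquivalent_log_div_log.symm.tendsto_atTop tendsto_log_atTop)).congr' ?_
  filter_upwards [eventually_gt_atTop 1] with x hx
  exact exp_log (div_pos (by positivity) (log_pos hx))

theorem isLittleO_log_div_log_rpow {a : ℝ} (ha : 0 < a) :
    log =o[atTop] fun x => (x / log x) ^ a :=
  isEquivalent_log_div_log.isBigO_symm.trans_isLittleO
    ((isLittleO_log_rpow_atTop ha).comp_tendsto tendsto_div_log_atTop)

/-- The depth limit `Ĥ(n)` of Corollary 1. -/
noncomputable def depthLimit (c d ρ n : ℝ) : ℝ :=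
  log (c * (n / log n) ^ (-(1 / (d + 2)))) / log ρ

section DepthLimit

variable {c d ρ : ℝ}

theorem rpow_depthLimit_mul (hc : 0 < c) (hρ₀ : 0 < ρ) (hρ₁ : ρ ≠ 1) {n : ℝ} (hn : 1 < n)
    (s : ℝ) :
    ρ ^ (depthLimit c d ρ n * s) = c ^ s * (n / log n) ^ (-(1 / (d + 2)) * s) := by
  have ht : 0 < n / log n := div_pos (by linarith) (log_pos hn)
  rw [depthLimit, rpow_log_div_log_mul hρ₀ hρ₁ (by positivity),
    mul_rpow hc.le (rpow_nonneg ht.le _), ← rpow_mul ht.le]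

theorem depthLimit_isBigO_log (hc : c ≠ 0) : depthLimit c d ρ =O[atTop] log := by
  have hlin : (fun n => log c + -(1 / (d + 2)) * log (n / log n)) =O[atTop] log :=
    isLittleO_const_log_atTop.isBigO.add (isEquivalent_log_div_log.isBigO.const_mul_left _)
  refine (hlin.const_mul_left (log ρ)⁻¹).congr' ?_ EventuallyEq.rfl
  filter_upwards [eventually_gt_atTop 1] with n hn
  have ht : 0 < n / log n := div_pos (by linarith) (log_pos hn)
  rw [depthLimit, log_mul hc (rpow_pos_of_pos ht _).ne', log_rpow ht]
  exact inv_mul_eq_div _ _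

theorem mul_rpow_depthLimit_eventuallyEq (hc : 0 < c) (hd : d + 2 ≠ 0) (hρ₀ : 0 < ρ)
    (hρ₁ : ρ ≠ 1) :
    (fun n => n * ρ ^ depthLimit c d ρ n)
      =ᶠ[atTop] fun n => c * ((n / log n) ^ ((d + 1) / (d + 2)) * log n) := by
  filter_upwards [eventually_gt_atTop 1] with n hn
  have hlog := log_pos hn
  have ht : n / log n ≠ 0 := (div_pos (by linarith) hlog).ne'
  have hexp : (d + 1) / (d + 2) = -(1 / (d + 2)) + 1 := by field_simp; ring
  rw [← mul_one (depthLimit c d ρ n), rpow_depthLimit_mul hc hρ₀ hρ₁ hn, rpow_one, mul_one, hexp,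
    rpow_add_one ht, mul_assoc, div_mul_cancel₀ _ hlog.ne']
  ring

theorem log_mul_rpow_neg_depthLimit_eventuallyEq (hc : 0 < c) (hd : d + 2 ≠ 0) (hρ₀ : 0 < ρ)
    (hρ₁ : ρ ≠ 1) :
    (fun n => log n * ρ ^ (-(depthLimit c d ρ n * (1 + d))))
      =ᶠ[atTop] fun n => c ^ (-(1 + d)) * ((n / log n) ^ ((d + 1) / (d + 2)) * log n) := by
  filter_upwards [eventually_gt_atTop 1] with n hn
  have hexp : -(1 / (d + 2)) * -(1 + d) = (d + 1) / (d + 2) := by field_simp; ring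
  rw [← mul_neg, rpow_depthLimit_mul hc hρ₀ hρ₁ hn, hexp]
  ring

theorem max_rpow_depthLimit_isBigO (hc : 0 < c) (hd : -1 < d) (hρ₀ : 0 < ρ) (hρ₁ : ρ ≠ 1) :
    (fun n => max (ρ ^ (depthLimit c d ρ n * (1 - d))) (depthLimit c d ρ n))
      =O[atTop] fun n => (n / log n) ^ ((d + 1) / (d + 2)) := by
  have hd2 : 0 < d + 2 := by linarith
  have hexp : -(1 / (d + 2)) * (1 - d) ≤ (d + 1) / (d + 2) := by
    rw [neg_mul, one_div_mul_eq_div, ← neg_div, div_le_div_iff_of_pos_right hd2]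
    linarith
  have hpow : (fun n => ρ ^ (depthLimit c d ρ n * (1 - d)))
      =O[atTop] fun n => (n / log n) ^ ((d + 1) / (d + 2)) := by
    refine EventuallyEq.trans_isBigO ?_ ((isBigO_const_mul_self (c ^ (1 - d)) _ _).trans
      ((isBigO_rpow_rpow_atTop_of_le hexp).comp_tendsto tendsto_div_log_atTop))
    filter_upwards [eventually_gt_atTop 1] with n hn
    exact rpow_depthLimit_mul hc hρ₀ hρ₁ hn _
  exact isBigO_max hpow ((depthLimit_isBigO_log hc.ne').trans
    (isLittleO_log_div_log_rpow (div_pos (by linarith) hd2)).isBigO)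

end DepthLimit

/-- asymptotic content of Corollary 1: with the depth limit
`Ĥ(n) = log(c·(n/log n)^{−1/(d+2)}) / log ρ` (so that `ρ^{Ĥ(n)} = c(n/log n)^{−1/(d+2)}`),
the regret bound `n·ρ^Ĥ + (log n)·ρ^{−Ĥ(1+d)} + Ĥ·max{ρ^{Ĥ(1−d)}, Ĥ}` is
`O(n^{(d+1)/(d+2)}·(log n)^{1/(d+2)})` as `n → ∞`. -/
theorem corollary_regret_bigO
    (c d ρ : ℝ) (hc : 0 < c) (hd : 0 ≤ d) (hρ₀ : 0 < ρ) (hρ₁ : ρ < 1) :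
    (fun n : ℝ =>
        let H : ℝ := Real.log (c * (n / Real.log n) ^ (-(1 / (d + 2)))) / Real.log ρ
        n * ρ ^ H + Real.log n * ρ ^ (-(H * (1 + d))) + H * max (ρ ^ (H * (1 - d))) H)
      =O[atTop]
    (fun n : ℝ => n ^ ((d + 1) / (d + 2)) * Real.log n ^ (1 / (d + 2))) := by
  have hd₂ : d + 2 ≠ 0 := by positivity
  have hd₁ : -1 < d := by linarith
  have hρ : ρ ≠ 1 := hρ₁.ne
  have hregret : (fun n => depthLimit c d ρ n * max (ρ ^ (depthLimit c d ρ n * (1 - d)))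
      (depthLimit c d ρ n)) =O[atTop] fun n => (n / log n) ^ ((d + 1) / (d + 2)) * log n :=
    ((depthLimit_isBigO_log hc.ne').mul (max_rpow_depthLimit_isBigO hc hd₁ hρ₀ hρ)).congr_right
      fun n => mul_comm _ _
  have htarget : (fun n => (n / log n) ^ ((d + 1) / (d + 2)) * log n)
      =ᶠ[atTop] fun n => n ^ ((d + 1) / (d + 2)) * log n ^ (1 / (d + 2)) := by
    filter_upwards [eventually_gt_atTop 1] with n hn
    rw [div_rpow_mul_self (by linarith) (log_pos hn)]
    congr 2
    field_simp
    ring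
  exact ((((mul_rpow_depthLimit_eventuallyEq hc hd₂ hρ₀ hρ).trans_isBigO
    (isBigO_const_mul_self _ _ _)).add
    ((log_mul_rpow_neg_depthLimit_eventuallyEq hc hd₂ hρ₀ hρ).trans_isBigO
      (isBigO_const_mul_self _ _ _))).add hregret).trans_eventuallyEq htarget
end

section
/- Let X be a nonempty set, ℓ a semi-metric on X, and f : X → ℝ attaining its supremum at x* ∈ X and satisfying the weak Lipschitz condition. Fix ν₁ > 0, 0 < ρ < 1 and an integer h ≥ 1. Let V ⊆ X be a nonempty cell at depth h−1 that is 2ν₁ρ^{h−1}-optimal, i.e., sup_{x∈V} f(x) ≥ f(x*) − 2ν₁ρ^{h−1}, and let U ⊆ V be any nonempty subset (a child cell of V). Then f(x*) − sup_{x∈U} f(x) ≤ 4ν₁ρ^{h−1}, provided diam(V) ≤ ν₁ρ^{h−1}. -/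
/-- every (nonempty) child cell `U` of a `2ν₁ρ^{h−1}`-optimal cell `V` of
diameter at most `ν₁ρ^{h−1}` satisfies `f xstar − sup_{x ∈ U} f x ≤ 4ν₁ρ^{h−1}`. -/
theorem child_of_near_optimal_cell_regret_le
    {X : Type*} [Nonempty X] (ℓ : X → X → ℝ) (f : X → ℝ) (xstar : X)
    (hℓ_nonneg : ∀ x x' : X, 0 ≤ ℓ x x')
    (hℓ_symm : ∀ x x' : X, ℓ x x' = ℓ x' x)
    (hℓ_eq_zero : ∀ x x' : X, ℓ x x' = 0 ↔ x = x')
    (hmax : ∀ x : X, f x ≤ f xstar)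
    (hweak : ∀ x x' : X,
      f xstar - f x' ≤ f xstar - f x + max (f xstar - f x) (ℓ x x'))
    (ν₁ ρ : ℝ) (hν₁ : 0 < ν₁) (hρ₀ : 0 < ρ) (hρ₁ : ρ < 1) (h : ℕ) (hh : 1 ≤ h)
    (V U : Set X) (hV : V.Nonempty) (hU : U.Nonempty) (hUV : U ⊆ V)
    (hdiam : ∀ x ∈ V, ∀ x' ∈ V, ℓ x x' ≤ ν₁ * ρ ^ (h - 1))
    (hopt : sSup (f '' V) ≥ f xstar - 2 * ν₁ * ρ ^ (h - 1)) :
    f xstar - sSup (f '' U) ≤ 4 * ν₁ * ρ ^ (h - 1) := by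
  set δ := ν₁ * ρ ^ (h - 1) with hδ
  have hδpos : 0 < δ := by positivity
  obtain ⟨x', hx'U⟩ := hU
  have hbddU : BddAbove (f '' U) := ⟨f xstar, by rintro _ ⟨y, _, rfl⟩; exact hmax y⟩
  have hbddV : BddAbove (f '' V) := ⟨f xstar, by rintro _ ⟨y, _, rfl⟩; exact hmax y⟩
  have hle : f x' ≤ sSup (f '' U) := le_csSup hbddU ⟨x', hx'U, rfl⟩
  have key : ∀ ε > 0, f xstar - f x' ≤ 4 * δ + 2 * ε := by
    intro ε hε
    obtain ⟨_, ⟨x, hxV, rfl⟩, hx⟩ :=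
      exists_lt_of_lt_csSup (hV.image f) (show f xstar - 2 * δ - ε < sSup (f '' V) by
        have : f xstar - 2 * ν₁ * ρ ^ (h - 1) ≤ sSup (f '' V) := hopt
        nlinarith)
    have h1 : f xstar - f x ≤ 2 * δ + ε := by nlinarith
    have h2 : ℓ x x' ≤ δ := hdiam x hxV x' (hUV hx'U)
    have := hweak x x'
    have hmaxle : max (f xstar - f x) (ℓ x x') ≤ 2 * δ + ε :=
      max_le h1 (by linarith)
    linarith
  have : f xstar - f x' ≤ 4 * δ := by
    by_contra hc
    push_neg at hc
    have := key ((f xstar - f x' - 4 * δ) / 4) (by linarith)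
    linarith
  linarith
end
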